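/- For vectors E, E* in R^3 and a function σ: [0,∞) → [0,∞) that is monotone increasing, the inner product [σ(|E|)E − σ(|E*|)E*]·(E − E*) is greater than or equal to (σ(|E|) − σ(|E*|))(|E|² − |E*|²)/2, and in particular is nonnegative. -/
import Mathlib


open scoped InnerProductSpace

/-- Key monotonicity inequality: for `σ : [0,∞) → [0,∞)` monotone increasing,
`[σ(|E|)E − σ(|E*|)E*]·(E − E*) ≥ (σ(|E|) − σ(|E*|))(|E|² − |E*|²)/2 ≥ 0`. -/
theorem monotonicity_inequality
    (σ : ℝ → ℝ) (hσ_nonneg : ∀ s ≥ 0, 0 ≤ σ s)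
    (hσ_mono : MonotoneOn σ (Set.Ici 0))
    (E Estar : EuclideanSpace ℝ (Fin 3)) :
    (σ ‖E‖ - σ ‖Estar‖) * (‖E‖ ^ 2 - ‖Estar‖ ^ 2) / 2 ≤
      ⟪σ ‖E‖ • E - σ ‖Estar‖ • Estar, E - Estar⟫_ℝ ∧
    0 ≤ ⟪σ ‖E‖ • E - σ ‖Estar‖ • Estar, E - Estar⟫_ℝ := by
  have ha : 0 ≤ σ ‖E‖ := hσ_nonneg _ (norm_nonneg _)
  have hb : 0 ≤ σ ‖Estar‖ := hσ_nonneg _ (norm_nonneg _)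
  have hcs : ⟪E, Estar⟫_ℝ ≤ ‖E‖ * ‖Estar‖ := real_inner_le_norm E Estar
  have hmono : 0 ≤ (σ ‖E‖ - σ ‖Estar‖) * (‖E‖ ^ 2 - ‖Estar‖ ^ 2) := by
    rcases le_total ‖E‖ ‖Estar‖ with h | h
    · have h1 := hσ_mono (Set.mem_Ici.2 (norm_nonneg E))
        (Set.mem_Ici.2 (norm_nonneg Estar)) h
      have h2 : ‖E‖ ^ 2 ≤ ‖Estar‖ ^ 2 := pow_le_pow_left₀ (norm_nonneg E) h 2
      nlinarith [mul_nonneg (sub_nonneg.2 h1) (sub_nonneg.2 h2)]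
    · have h1 := hσ_mono (Set.mem_Ici.2 (norm_nonneg Estar))
        (Set.mem_Ici.2 (norm_nonneg E)) h
      have h2 : ‖Estar‖ ^ 2 ≤ ‖E‖ ^ 2 := pow_le_pow_left₀ (norm_nonneg Estar) h 2
      nlinarith [mul_nonneg (sub_nonneg.2 h1) (sub_nonneg.2 h2)]
  have hexp : ⟪σ ‖E‖ • E - σ ‖Estar‖ • Estar, E - Estar⟫_ℝ
      = σ ‖E‖ * ‖E‖ ^ 2 + σ ‖Estar‖ * ‖Estar‖ ^ 2
        - (σ ‖E‖ + σ ‖Estar‖) * ⟪E, Estar⟫_ℝ := by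
    simp only [inner_sub_left, inner_sub_right, real_inner_smul_left,
      real_inner_self_eq_norm_sq, real_inner_comm Estar E]
    ring
  constructor <;>
    nlinarith [sq_nonneg (‖E‖ - ‖Estar‖), mul_nonneg (add_nonneg ha hb)
      (sq_nonneg (‖E‖ - ‖Estar‖))]
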